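/- Let Γ ⊆ ℝ³ be a C² surface with outward unit normal n, and let v be a C² vector field near Γ with div v = 0 and tangential component v_τ = 0 on Γ. Then on Γ, the normal-normal component of the strain tensor satisfies (ε(v) n, n) = (∂v/∂n, n) = −k(x)(v, n), where ε(v)_{ij} = ½(∂_i v_j + ∂_j v_i) and k(x) = div n(x) equals twice the mean curvature of Γ at x. -/

import Mathlib

noncomputable section

/-- The divergence of a vector field on `ℝ³`: `div v (x) = ∑ᵢ ∂ᵢvᵢ(x)`. -/
def diverg3 (v : EuclideanSpace ℝ (Fin 3) → EuclideanSpace ℝ (Fin 3))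
    (x : EuclideanSpace ℝ (Fin 3)) : ℝ :=
  ∑ i : Fin 3, fderiv ℝ v x (EuclideanSpace.single i 1) i

/-- The bilinear form of the strain tensor: `(ε(v) a, b) = ½((Dv a, b) + (Dv b, a))`. -/
def strainForm (v : EuclideanSpace ℝ (Fin 3) → EuclideanSpace ℝ (Fin 3))
    (x a b : EuclideanSpace ℝ (Fin 3)) : ℝ :=
  (1 / 2) * ((inner ℝ (fderiv ℝ v x a) b : ℝ) + (inner ℝ (fderiv ℝ v x b) a : ℝ))

theorem aux_sum_single (w : EuclideanSpace ℝ (Fin 3)) :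
    ∑ i : Fin 3, w i • EuclideanSpace.single i (1:ℝ) = w := by
  have := (EuclideanSpace.basisFun (Fin 3) ℝ).sum_repr w
  simpa [EuclideanSpace.basisFun_apply, EuclideanSpace.basisFun_repr] using this

/-- Theorem 2.2 of [kc]: let `Γ ⊆ ℝ³` be a `C²` surface with unit normal
field `n`, and `v` a `C²` divergence-free vector field whose tangential component vanishes
on `Γ` (so that the tangential derivatives, i.e. the derivatives in directions `w ⊥ n(x)`,
of the tangential part `v - (v·n)n` vanish at `x ∈ Γ`). Then at `x ∈ Γ`:
`(ε(v)n, n) = (∂v/∂n, n) = −k(x)(v, n)`, where `k(x) = div n(x)`. -/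
theorem stmt_5 (Γ : Set (EuclideanSpace ℝ (Fin 3)))
    (n v : EuclideanSpace ℝ (Fin 3) → EuclideanSpace ℝ (Fin 3))
    (hn : ContDiff ℝ 2 n) (hv : ContDiff ℝ 2 v)
    (hunit : ∀ y, ‖n y‖ = 1)
    (hdiv : ∀ y, diverg3 v y = 0)
    (x : EuclideanSpace ℝ (Fin 3)) (hx : x ∈ Γ)
    (htang : ∀ y ∈ Γ, v y - (inner ℝ (v y) (n y) : ℝ) • n y = 0)
    (htangderiv : ∀ w : EuclideanSpace ℝ (Fin 3), (inner ℝ w (n x) : ℝ) = 0 →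
      fderiv ℝ (fun y => v y - (inner ℝ (v y) (n y) : ℝ) • n y) x w = 0) :
    strainForm v x (n x) (n x) = (inner ℝ (fderiv ℝ v x (n x)) (n x) : ℝ) ∧
    (inner ℝ (fderiv ℝ v x (n x)) (n x) : ℝ) = -(diverg3 n x) * (inner ℝ (v x) (n x) : ℝ) := by
  have hvd : DifferentiableAt ℝ v x := (hv.differentiable (by norm_num)).differentiableAt
  have hnd : DifferentiableAt ℝ n x := (hn.differentiable (by norm_num)).differentiableAt
  have hφd : DifferentiableAt ℝ (fun y => (inner ℝ (v y) (n y) : ℝ)) x :=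
    hvd.inner ℝ hnd
  set m : EuclideanSpace ℝ (Fin 3) := n x with hm_def
  set T := fderiv ℝ v x with hT
  set S := fderiv ℝ n x with hS
  set L := fderiv ℝ (fun y => (inner ℝ (v y) (n y) : ℝ)) x with hL
  set φ : ℝ := (inner ℝ (v x) (n x) : ℝ) with hφ
  have hmm : (inner ℝ m m : ℝ) = 1 := by
    rw [real_inner_self_eq_norm_sq, hunit x]; norm_num
  -- derivative of the normal component part
  have hsmul : fderiv ℝ (fun y => (inner ℝ (v y) (n y) : ℝ) • n y) x
      = φ • S + L.smulRight m := fderiv_fun_smul hφd hnd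
  -- the unit-normal fact : ⟨S w, m⟩ = 0
  have hSn : ∀ w, (inner ℝ (S w) m : ℝ) = 0 := by
    intro w
    have hconst : (fun y => (inner ℝ (n y) (n y) : ℝ)) = fun _ => (1:ℝ) := by
      funext y
      rw [real_inner_self_eq_norm_sq, hunit y]; norm_num
    have h0 : fderiv ℝ (fun y => (inner ℝ (n y) (n y) : ℝ)) x w = 0 := by
      rw [hconst, fderiv_fun_const]; simp
    rw [fderiv_inner_apply ℝ hnd hnd w] at h0
    have := real_inner_comm (n x) (S w)
    rw [← hS, ← hm_def] at h0
    linarith [h0, real_inner_comm m (S w)]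
  -- key: on tangent vectors, T w = (L w) • m + φ • S w
  have hkey : ∀ w, (inner ℝ w m : ℝ) = 0 → T w = L w • m + φ • S w := by
    intro w hw
    have hdiff : fderiv ℝ (fun y => v y - (inner ℝ (v y) (n y) : ℝ) • n y) x
        = T - (φ • S + L.smulRight m) := by
      rw [hT, ← hsmul]
      exact fderiv_sub hvd (hφd.smul hnd)
    have h0 := htangderiv w hw
    rw [hdiff] at h0
    have : T w - (φ • S w + L w • m) = 0 := by
      simpa [ContinuousLinearMap.smulRight_apply] using h0
    have := sub_eq_zero.mp this
    rw [this]; abel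
  -- tangent part of basis vectors
  set e : Fin 3 → EuclideanSpace ℝ (Fin 3) := fun i => EuclideanSpace.single i 1 with he
  set t : Fin 3 → EuclideanSpace ℝ (Fin 3) := fun i => e i - m i • m with ht
  have hti : ∀ i, (inner ℝ (t i) m : ℝ) = 0 := by
    intro i
    rw [ht]
    simp only [inner_sub_left, real_inner_smul_left, hmm]
    rw [he]
    simp [EuclideanSpace.inner_single_left]
  -- compute each term of div v
  have hTe : ∀ i, (T (e i)) i = m i * (T m) i + L (t i) * m i + φ * (S (t i)) i := by
    intro i
    have hdecomp : e i = m i • m + t i := by simp only [ht]; abel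
    calc (T (e i)) i = (T (m i • m + t i)) i := by rw [← hdecomp]
      _ = (m i • T m + T (t i)) i := by rw [map_add, map_smul]
      _ = m i * (T m) i + (L (t i) • m + φ • S (t i)) i := by
          rw [hkey (t i) (hti i)]; simp [PiLp.add_apply, PiLp.smul_apply]
      _ = m i * (T m) i + L (t i) * m i + φ * (S (t i)) i := by
          simp [PiLp.add_apply, PiLp.smul_apply]; ring
  -- the three sums
  have hinner_sum : ∀ (u w : EuclideanSpace ℝ (Fin 3)), (inner ℝ u w : ℝ) = ∑ i, u i * w i := by
    intro u w
    rw [real_inner_comm]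
    simp [PiLp.inner_apply, RCLike.inner_apply, mul_comm]
  have hsum1 : ∑ i, m i * (T m) i = (inner ℝ (T m) m : ℝ) := by
    rw [hinner_sum]; exact Finset.sum_congr rfl fun i _ => mul_comm _ _
  have hsum2 : ∑ i, L (t i) * m i = 0 := by
    have : ∑ i, m i • t i = 0 := by
      rw [ht]
      simp only [smul_sub, Finset.sum_sub_distrib]
      rw [he]
      have h1 : ∑ i : Fin 3, m i • EuclideanSpace.single i (1:ℝ) = m := aux_sum_single m
      have h2 : ∑ i : Fin 3, m i • m i • m = m := by
        simp only [smul_smul]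
        rw [← Finset.sum_smul]
        have : ∑ i : Fin 3, m i * m i = (1:ℝ) := by
          rw [← hmm, hinner_sum]
        rw [this, one_smul]
      rw [h1, h2, sub_self]
    calc ∑ i, L (t i) * m i = ∑ i, L (m i • t i) := by
          refine Finset.sum_congr rfl fun i _ => ?_
          rw [map_smul]; simp [smul_eq_mul, mul_comm]
      _ = L (∑ i, m i • t i) := by rw [map_sum]
      _ = 0 := by rw [this, map_zero]
  have hsum3 : ∑ i, (S (t i)) i = diverg3 n x := by
    have : ∀ i, (S (t i)) i = (S (e i)) i - m i * (S m) i := by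
      intro i
      rw [ht]
      simp only [map_sub, map_smul, PiLp.sub_apply, PiLp.smul_apply, smul_eq_mul]
    rw [Finset.sum_congr rfl fun i _ => this i, Finset.sum_sub_distrib]
    have h1 : ∑ i, m i * (S m) i = (inner ℝ (S m) m : ℝ) := by
      rw [hinner_sum]; exact Finset.sum_congr rfl fun i _ => mul_comm _ _
    rw [h1, hSn m, sub_zero]
    rfl
  have hdivv : diverg3 v x = (inner ℝ (T m) m : ℝ) + φ * diverg3 n x := by
    unfold diverg3
    calc ∑ i : Fin 3, fderiv ℝ v x (EuclideanSpace.single i 1) i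
        = ∑ i : Fin 3, (T (e i)) i := rfl
      _ = ∑ i, (m i * (T m) i + L (t i) * m i + φ * (S (t i)) i) :=
          Finset.sum_congr rfl fun i _ => hTe i
      _ = (∑ i, m i * (T m) i) + (∑ i, L (t i) * m i) + φ * ∑ i, (S (t i)) i := by
          rw [Finset.sum_add_distrib, Finset.sum_add_distrib, Finset.mul_sum]
      _ = (inner ℝ (T m) m : ℝ) + φ * diverg3 n x := by
          rw [hsum1, hsum2, hsum3, add_zero]
  have hmain : (inner ℝ (T m) m : ℝ) = -(diverg3 n x) * φ := by
    have := hdiv x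
    rw [hdivv] at this
    linarith
  constructor
  · show (1/2 : ℝ) * ((inner ℝ (T m) m : ℝ) + (inner ℝ (T m) m : ℝ)) = (inner ℝ (T m) m : ℝ)
    ring
  · exact hmain
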